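/- arXiv:math/9906002 — 2 statements merged into one kernel-verified Lean document; each statement's English description precedes it below -/
import Mathlib

section
/- Let Z be a subgraph of the ℤ² lattice graph whose dual configuration Z* contains no circuits. Let x and y be nearest neighbors in ℤ² such that the edge ⟨x,y⟩ is absent from Z, and suppose that the connected component of Z* containing the dual edge ⟨x,y⟩* is contained in the box Λ(x,k−1). Then x and y are connected by a path in Z that is contained in the box Λ(x,k) (the path obtained by going clockwise around the outer boundary of that dual component). -/
open MeasureTheory ProbabilityTheory

/-- Vertices of the `ℤ²` lattice. -/
abbrev V2 : Type := ℤ × ℤ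

/-- `L¹` distance on `ℤ²` (also used for dual vertices, in shifted coordinates). -/
def dist1 (x y : V2) : ℕ := (x.1 - y.1).natAbs + (x.2 - y.2).natAbs

/-- Two vertices of `ℤ²` are nearest neighbors iff their `L¹` distance is `1`. -/
def latticeAdj (x y : V2) : Prop := dist1 x y = 1

/-- The edges of the `ℤ²` lattice graph, as unordered pairs of vertices. -/
def latticeEdges : Set (Sym2 V2) := {e | ∃ x y, latticeAdj x y ∧ e = s(x, y)}

/-- The graph on `ℤ²` determined by an edge configuration `Z`:
`x` and `y` are adjacent iff they are nearest neighbors and the edge `⟨x,y⟩` belongs to `Z`. -/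
def graphOf (Z : Set (Sym2 V2)) : SimpleGraph V2 where
  Adj x y := latticeAdj x y ∧ s(x, y) ∈ Z
  symm := by
    constructor
    intro x y h
    refine ⟨?_, ?_⟩
    · have := h.1; unfold latticeAdj dist1 at *; omega
    · rw [Sym2.eq_swap]; exact h.2
  loopless := by
    constructor
    intro x h
    have := h.1; unfold latticeAdj dist1 at this; omega

/-- The connected component of `x` in the configuration `Z` is infinite. -/
def compInfinite (Z : Set (Sym2 V2)) (x : V2) : Prop :=
  {y | (graphOf Z).Reachable x y}.Infinite

/-- `X` is an everywhere percolating subgraph of `ℤ²`: it is a set of lattice edges and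
every vertex lies in an infinite connected component of `X`. -/
def EverywherePercolating (X : Set (Sym2 V2)) : Prop :=
  X ⊆ latticeEdges ∧ ∀ x : V2, compInfinite X x

/-- The dual configuration `Z*`.  A dual vertex `d` stands for the point `d + (1/2, 1/2)` of the
dual lattice `ℤ² + (1/2,1/2)`.  The dual edge joining `(a, b-1)` and `(a, b)` crosses the primal
horizontal edge from `(a, b)` to `(a+1, b)`, and the dual edge joining `(a-1, b)` and `(a, b)`
crosses the primal vertical edge from `(a, b)` to `(a, b+1)`.  A dual edge is present in `Z*`
iff the primal edge crossing it is absent from `Z`. -/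
def dualConfig (Z : Set (Sym2 V2)) : Set (Sym2 V2) :=
  {e | ∃ a b : ℤ,
    (e = s(((a, b - 1) : V2), ((a, b) : V2)) ∧ s(((a, b) : V2), ((a + 1, b) : V2)) ∉ Z) ∨
    (e = s(((a - 1, b) : V2), ((a, b) : V2)) ∧ s(((a, b) : V2), ((a, b + 1) : V2)) ∉ Z)}

/-- The box `Λ(x, m) = x + [-m/2, m/2]²`, as a set of vertices of `ℤ²`. -/
def box (x : V2) (m : ℕ) : Set V2 :=
  {y | 2 * (y.1 - x.1).natAbs ≤ m ∧ 2 * (y.2 - x.2).natAbs ≤ m}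

/-- The dual vertex `d` (representing the point `d + (1/2,1/2)`) lies in the box
`Λ(x, m) = x + [-m/2, m/2]²`. -/
def dualMemBox (x : V2) (m : ℕ) (d : V2) : Prop :=
  (2 * (d.1 - x.1) + 1).natAbs ≤ m ∧ (2 * (d.2 - x.2) + 1).natAbs ≤ m

/-- `B` is a family of independent `{0,1}`-valued random variables, indexed by the (potential)
edges of `ℤ²`, each taking the value `true` with probability `p`. -/
def BernoulliFamily {Ω : Type} [MeasurableSpace Ω] (μ : Measure Ω) (p : ℝ)
    (B : Sym2 V2 → Ω → Bool) : Prop :=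
  (∀ e, Measurable (B e)) ∧
  iIndepFun B μ ∧
  ∀ e, μ {ω | B e ω = true} = ENNReal.ofReal p

/-- The configuration obtained from `X` by `ε`-Bernoulli addition, in the sample point `ω`:
an edge of `ℤ²` is present iff it is in `X` or the corresponding Bernoulli variable is `true`. -/
def addConfig {Ω : Type} (X : Set (Sym2 V2)) (B : Sym2 V2 → Ω → Bool) (ω : Ω) :
    Set (Sym2 V2) :=
  X ∪ {e ∈ latticeEdges | B e ω = true}

/-- The vertex `n • x` of `ℤ²`. -/
def scale (n : ℕ) (x : V2) : V2 := ((n : ℤ) * x.1, (n : ℤ) * x.2)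

/-- `nx` and `ny` are closely connected in the configuration `Z`: there is a path in `Z` from
`nx` to `ny` inside `Λ(nx, n) ∪ Λ(ny, n)`. -/
def CloselyConnected (Z : Set (Sym2 V2)) (n : ℕ) (x y : V2) : Prop :=
  ∃ w : (graphOf Z).Walk (scale n x) (scale n y),
    ∀ v ∈ w.support, v ∈ box (scale n x) n ∪ box (scale n y) n

/-- The renormalized configuration `Z̃ₙ`: the edge `⟨x,y⟩` of `ℤ²` is present iff `nx` and `ny`
are closely connected in `Z`. -/
def renorm (Z : Set (Sym2 V2)) (n : ℕ) : Set (Sym2 V2) :=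
  {e | ∃ x y : V2, latticeAdj x y ∧ e = s(x, y) ∧ CloselyConnected Z n x y}

/-- The dual edge `⟨d,d'⟩` is the edge of the dual lattice crossing the primal edge `⟨x,y⟩`. -/
def crossPair (x y d d' : V2) : Prop :=
  (∃ a b : ℤ, s(x, y) = s(((a, b) : V2), ((a + 1, b) : V2)) ∧
      s(d, d') = s(((a, b - 1) : V2), ((a, b) : V2))) ∨
  (∃ a b : ℤ, s(x, y) = s(((a, b) : V2), ((a, b + 1) : V2)) ∧
      s(d, d') = s(((a - 1, b) : V2), ((a, b) : V2)))

/-!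
Peel the finite tree `C` of `Z*` containing `⟨x,y⟩*` one leaf at a time. If the dual vertex `u`
is a leaf of `C`, three sides of the face `u` belong to `Z`, so its fourth side can be bypassed
by a walk around the face; adding that fourth side to `Z` deletes the leaf edge from `Z*` and
shrinks `C`. Induction on `|C|` therefore joins `x` to `y` by a walk through corners of faces of
`C`, and these corners lie in `Λ(x,k)` because `C ⊆ Λ(x,k-1)`.
-/

namespace SimpleGraph

variable {V : Type*} {G H : SimpleGraph V}

theorem Walk.exists_walk_of_forall_adj {P : V → Prop}
    (h : ∀ a b, G.Adj a b → P a → P b → ∃ W : H.Walk a b, ∀ t ∈ W.support, P t) :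
    ∀ {a b : V} (p : G.Walk a b), (∀ t ∈ p.support, P t) →
      ∃ W : H.Walk a b, ∀ t ∈ W.support, P t
  | _, _, .nil, hp => ⟨.nil, hp⟩
  | _, _, .cons hadj p, hp => by
    obtain ⟨W₁, hW₁⟩ := h _ _ hadj (hp _ (by simp)) (hp _ (by simp))
    obtain ⟨W₂, hW₂⟩ := exists_walk_of_forall_adj h p fun t ht => hp t (by simp [ht])
    refine ⟨W₁.append W₂, fun t ht => ?_⟩
    rw [Walk.mem_support_append_iff] at ht
    exact ht.elim (hW₁ t) (hW₂ t)

theorem Walk.IsPath.length_lt_ncard {u v : V} {p : G.Walk u v} (hp : p.IsPath) {s : Set V}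
    (hs : s.Finite) (hsub : ∀ t ∈ p.support, t ∈ s) : p.length < s.ncard := by
  classical
  calc p.length < p.support.length := by simp [Walk.length_support]
    _ = p.support.toFinset.card := (List.toFinset_card_of_nodup hp.support_nodup).symm
    _ = (p.support.toFinset : Set V).ncard := (Set.ncard_coe_finset _).symm
    _ ≤ s.ncard := Set.ncard_le_ncard (fun t ht => hsub t (by simpa using ht)) hs

/-- The start of a longest path ending at `r` is a leaf. -/
theorem IsAcyclic.exists_leaf_ne_of_adj (hG : G.IsAcyclic) {r r' : V} (hr : G.Adj r r')
    (hfin : {v | G.Reachable r v}.Finite) :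
    ∃ u, u ≠ r ∧ G.Reachable r u ∧ ∃ w, G.Adj u w ∧ ∀ v, G.Adj u v → v = w := by
  classical
  set L := {n | ∃ u, ∃ p : G.Walk u r, p.IsPath ∧ p.length = n}
  have hL : L.Finite := (Set.finite_lt_nat _).subset fun n ⟨u, p, hp, hn⟩ =>
    hn ▸ hp.length_lt_ncard hfin fun t ht => ⟨(p.dropUntil t ht).reverse⟩
  have h1 : 1 ∈ L := ⟨r', .cons hr.symm .nil, by simp [hr.ne'], rfl⟩
  obtain ⟨_, ⟨u, p, hp, rfl⟩, hmax⟩ := Set.exists_max_image L id hL ⟨1, h1⟩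
  have hur : u ≠ r := by
    rintro rfl
    have := hmax 1 h1
    simp [Walk.length_eq_zero_iff.2 (Walk.isPath_iff_nil.1 hp)] at this
  have hnil : ¬p.Nil := Walk.not_nil_of_ne hur
  refine ⟨u, hur, ⟨p.reverse⟩, p.snd, p.adj_snd hnil, fun v hv => ?_⟩
  by_cases hvp : v ∈ p.support
  · exact hG.eq_snd_of_adj_start hp hv hvp
  · have := hmax _ ⟨v, .cons hv.symm p, hp.cons hvp, rfl⟩
    simp at this

theorem setOf_reachable_ssubset_of_le {G' : SimpleGraph V} (hle : G' ≤ G) {r u : V}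
    (hur : u ≠ r) (hru : G.Reachable r u) (hu : ∀ v, ¬G'.Adj u v) :
    {v | G'.Reachable r v} ⊂ {v | G.Reachable r v} := by
  refine (Set.ssubset_iff_of_subset fun v h => h.mono hle).2 ⟨u, hru, fun h => ?_⟩
  obtain ⟨W⟩ := h.symm
  cases W with
  | nil => exact hur rfl
  | cons h _ => exact hu _ h

end SimpleGraph

open SimpleGraph

theorem graphOf_adj {Z : Set (Sym2 V2)} {a b : V2} :
    (graphOf Z).Adj a b ↔ latticeAdj a b ∧ s(a, b) ∈ Z :=
  Iff.rfl

/-- `crossPair x y d d'` unfolds to `IsCrossing s(x, y) s(d, d')`. -/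
def IsCrossing (p q : Sym2 V2) : Prop :=
  (∃ a b : ℤ, p = s(((a, b) : V2), ((a + 1, b) : V2)) ∧
      q = s(((a, b - 1) : V2), ((a, b) : V2))) ∨
  (∃ a b : ℤ, p = s(((a, b) : V2), ((a, b + 1) : V2)) ∧
      q = s(((a - 1, b) : V2), ((a, b) : V2)))

theorem mem_dualConfig_iff_exists {Z : Set (Sym2 V2)} {q : Sym2 V2} :
    q ∈ dualConfig Z ↔ ∃ p, IsCrossing p q ∧ p ∉ Z := by
  constructor
  · rintro ⟨a, b, ⟨rfl, h⟩ | ⟨rfl, h⟩⟩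
    exacts [⟨_, .inl ⟨a, b, rfl, rfl⟩, h⟩, ⟨_, .inr ⟨a, b, rfl, rfl⟩, h⟩]
  · rintro ⟨p, ⟨a, b, rfl, rfl⟩ | ⟨a, b, rfl, rfl⟩, h⟩
    exacts [⟨a, b, .inl ⟨rfl, h⟩⟩, ⟨a, b, .inr ⟨rfl, h⟩⟩]

namespace IsCrossing

variable {Z : Set (Sym2 V2)} {p p' q q' : Sym2 V2}

theorem left_unique (h : IsCrossing p q) (h' : IsCrossing p' q) : p = p' := by
  rcases h with ⟨a, b, rfl, rfl⟩ | ⟨a, b, rfl, rfl⟩ <;>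
    rcases h' with ⟨c, d, rfl, hq⟩ | ⟨c, d, rfl, hq⟩ <;>
    simp only [Sym2.eq_iff, Prod.mk.injEq] at hq ⊢ <;> omega

theorem right_unique (h : IsCrossing p q) (h' : IsCrossing p q') : q = q' := by
  rcases h with ⟨a, b, rfl, rfl⟩ | ⟨a, b, rfl, rfl⟩ <;>
    rcases h' with ⟨c, d, hp, rfl⟩ | ⟨c, d, hp, rfl⟩ <;>
    simp only [Sym2.eq_iff, Prod.mk.injEq] at hp ⊢ <;> omega

theorem latticeAdj_right {δ₁ δ₂ : V2} (h : IsCrossing p s(δ₁, δ₂)) :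
    latticeAdj δ₁ δ₂ := by
  rcases h with ⟨a, b, -, hq⟩ | ⟨a, b, -, hq⟩ <;>
    rcases Sym2.eq_iff.1 hq with ⟨rfl, rfl⟩ | ⟨rfl, rfl⟩ <;>
    simp [latticeAdj, dist1]

theorem mem_dualConfig_iff (h : IsCrossing p q) : q ∈ dualConfig Z ↔ p ∉ Z := by
  rw [mem_dualConfig_iff_exists]
  exact ⟨fun ⟨p', hp', hZ⟩ => h.left_unique hp' ▸ hZ, fun hZ => ⟨p, h, hZ⟩⟩

theorem mem_dualConfig_insert_iff (h : IsCrossing p q) {q' : Sym2 V2} :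
    q' ∈ dualConfig (insert p Z) ↔ q' ∈ dualConfig Z ∧ q' ≠ q := by
  simp only [mem_dualConfig_iff_exists, Set.mem_insert_iff, not_or]
  constructor
  · rintro ⟨p', hp', hne, hZ⟩
    exact ⟨⟨p', hp', hZ⟩, fun hq => hne ((hq ▸ hp').left_unique h)⟩
  · rintro ⟨⟨p', hp', hZ⟩, hne⟩
    exact ⟨p', hp', fun hp => hne ((hp ▸ hp').right_unique h), hZ⟩

theorem adj_dualConfig_insert_iff (h : IsCrossing p q) {a b : V2} :
    (graphOf (dualConfig (insert p Z))).Adj a b ↔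
      (graphOf (dualConfig Z)).Adj a b ∧ s(a, b) ≠ q := by
  show latticeAdj a b ∧ _ ↔ (latticeAdj a b ∧ _) ∧ _
  rw [h.mem_dualConfig_insert_iff, and_assoc]

end IsCrossing

theorem exists_isCrossing_of_latticeAdj {x y : V2} (h : latticeAdj x y) :
    ∃ d d', IsCrossing s(x, y) s(d, d') := by
  obtain ⟨a, b⟩ := x
  obtain ⟨c, d⟩ := y
  simp only [latticeAdj, dist1] at h
  rcases (by omega : (c = a + 1 ∧ d = b) ∨ (a = c + 1 ∧ b = d) ∨ (c = a ∧ d = b + 1) ∨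
      (a = c ∧ b = d + 1)) with ⟨rfl, rfl⟩ | ⟨rfl, rfl⟩ | ⟨rfl, rfl⟩ | ⟨rfl, rfl⟩
  exacts [⟨_, _, .inl ⟨_, _, rfl, rfl⟩⟩, ⟨_, _, .inl ⟨_, _, Sym2.eq_swap, rfl⟩⟩,
    ⟨_, _, .inr ⟨_, _, rfl, rfl⟩⟩, ⟨_, _, .inr ⟨_, _, Sym2.eq_swap, rfl⟩⟩]

/-- The dual vertex `u` is the unit face with lower-left corner `u`; its corners are listed
counterclockwise, side `i` joins corners `i` and `i + 1`, and `u + faceDir i` is the face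
across side `i`. -/
def faceCorner (u : V2) : Fin 4 → V2 := ![u, u + (1, 0), u + (1, 1), u + (0, 1)]

def faceDir : Fin 4 → V2 := ![(0, -1), (1, 0), (0, 1), (-1, 0)]

def faceSide (u : V2) (i : Fin 4) : Sym2 V2 := s(faceCorner u i, faceCorner u (i + 1))

theorem isCrossing_faceSide (u : V2) (i : Fin 4) :
    IsCrossing (faceSide u i) s(u, u + faceDir i) := by
  obtain ⟨a, b⟩ := u
  fin_cases i
  · exact .inl ⟨a, b, by simp [faceSide, faceCorner],
      by simp [faceDir, Sym2.eq_swap, sub_eq_add_neg]⟩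
  · exact .inr ⟨a + 1, b, by simp [faceSide, faceCorner], by simp [faceDir]⟩
  · exact .inl ⟨a, b + 1, by simp [faceSide, faceCorner, Sym2.eq_swap], by simp [faceDir]⟩
  · exact .inr ⟨a, b, by simp [faceSide, faceCorner, Sym2.eq_swap],
      by simp [faceDir, Sym2.eq_swap, sub_eq_add_neg]⟩

theorem latticeAdj_add_faceDir (u : V2) (i : Fin 4) : latticeAdj u (u + faceDir i) := by
  fin_cases i <;> simp [latticeAdj, dist1, faceDir]

theorem latticeAdj_faceCorner (u : V2) (i : Fin 4) :
    latticeAdj (faceCorner u i) (faceCorner u (i + 1)) := by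
  fin_cases i <;> simp [latticeAdj, dist1, faceCorner]

theorem faceDir_injective : Function.Injective faceDir := by decide

theorem exists_eq_add_faceDir {u w : V2} (h : latticeAdj u w) : ∃ i, w = u + faceDir i := by
  obtain ⟨a, b⟩ := u
  obtain ⟨c, d⟩ := w
  simp only [latticeAdj, dist1] at h
  rcases (by omega : (c = a ∧ d = b - 1) ∨ (c = a + 1 ∧ d = b) ∨ (c = a ∧ d = b + 1) ∨
      (c = a - 1 ∧ d = b)) with ⟨rfl, rfl⟩ | ⟨rfl, rfl⟩ | ⟨rfl, rfl⟩ | ⟨rfl, rfl⟩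
  exacts [⟨0, by simp [faceDir, sub_eq_add_neg]⟩, ⟨1, by simp [faceDir]⟩,
    ⟨2, by simp [faceDir]⟩, ⟨3, by simp [faceDir, sub_eq_add_neg]⟩]

theorem faceCorner_mem_box {x u : V2} {k : ℕ} (h : dualMemBox x (k - 1) u) (i : Fin 4) :
    faceCorner u i ∈ box x k := by
  obtain ⟨h₁, h₂⟩ := h
  fin_cases i <;> simp [faceCorner, box] <;> omega

theorem finite_setOf_dualMemBox (x : V2) (m : ℕ) : {d | dualMemBox x m d}.Finite :=
  ((Set.finite_Icc (x.1 - m) (x.1 + m)).prod (Set.finite_Icc (x.2 - m) (x.2 + m))).subset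
    fun d ⟨h₁, h₂⟩ => ⟨⟨by omega, by omega⟩, ⟨by omega, by omega⟩⟩

theorem exists_walk_around_leaf_face {Z : Set (Sym2 V2)} {u w p₁ p₂ : V2}
    (hleaf : ∀ v, (graphOf (dualConfig Z)).Adj u v → v = w)
    (hcross : IsCrossing s(p₁, p₂) s(u, w)) :
    ∃ W : (graphOf Z).Walk p₁ p₂, ∀ t ∈ W.support, t ∈ Set.range (faceCorner u) := by
  obtain ⟨j, rfl⟩ := exists_eq_add_faceDir hcross.latticeAdj_right
  have hadj : ∀ i, i ≠ j → (graphOf Z).Adj (faceCorner u i) (faceCorner u (i + 1)) := by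
    refine fun i hij => ⟨latticeAdj_faceCorner u i, by_contra fun hi => hij ?_⟩
    exact faceDir_injective <| add_left_cancel <| hleaf _
      ⟨latticeAdj_add_faceDir u i, (isCrossing_faceSide u i).mem_dualConfig_iff.2 hi⟩
  have hcycle : ∀ i : Fin 4,
      i + 1 ≠ i ∧ i + 1 + 1 ≠ i ∧ i + 1 + 1 + 1 ≠ i ∧ i + 1 + 1 + 1 + 1 = i := by
    decide
  obtain ⟨h₁, h₂, h₃, h₄⟩ := hcycle j
  let W : (graphOf Z).Walk (faceCorner u (j + 1)) (faceCorner u j) :=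
    (Walk.cons (hadj _ h₁) <| .cons (hadj _ h₂) <| .cons (hadj _ h₃) .nil).copy rfl
      (by rw [h₄])
  have hW : ∀ t ∈ W.support, t ∈ Set.range (faceCorner u) := by
    simp only [W, Walk.support_copy, Walk.support_cons, Walk.support_nil, List.mem_cons,
      List.not_mem_nil, or_false]
    rintro t (rfl | rfl | rfl | rfl) <;> exact ⟨_, rfl⟩
  rcases Sym2.eq_iff.1 ((isCrossing_faceSide u j).left_unique hcross) with
    ⟨rfl, rfl⟩ | ⟨rfl, rfl⟩
  · exact ⟨W.reverse, fun t ht => hW t (by simpa using ht)⟩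
  · exact ⟨W, hW⟩

theorem exists_walk_around_dual_component {Z : Set (Sym2 V2)}
    (hac : (graphOf (dualConfig Z)).IsAcyclic) {p₁ p₂ δ₁ δ₂ : V2}
    (hcross : IsCrossing s(p₁, p₂) s(δ₁, δ₂)) (hp : s(p₁, p₂) ∉ Z)
    (hfin : {v | (graphOf (dualConfig Z)).Reachable δ₁ v}.Finite) :
    ∃ W : (graphOf Z).Walk p₁ p₂, ∀ t ∈ W.support,
      ∃ u, (graphOf (dualConfig Z)).Reachable δ₁ u ∧ t ∈ Set.range (faceCorner u) := by
  induction hn : {v | (graphOf (dualConfig Z)).Reachable δ₁ v}.ncard using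
    Nat.strong_induction_on generalizing Z with
  | _ n ih =>
  set G := graphOf (dualConfig Z)
  have hδ : G.Adj δ₁ δ₂ := ⟨hcross.latticeAdj_right, hcross.mem_dualConfig_iff.2 hp⟩
  obtain ⟨u, hu, hru, w, huw, hleaf⟩ := hac.exists_leaf_ne_of_adj hδ hfin
  by_cases hlast : s(u, w) = s(δ₁, δ₂)
  · obtain ⟨W, hW⟩ := exists_walk_around_leaf_face hleaf (hlast ▸ hcross)
    exact ⟨W, fun t ht => ⟨u, hru, hW t ht⟩⟩
  obtain ⟨j, rfl⟩ := exists_eq_add_faceDir huw.1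
  have hcross_u := isCrossing_faceSide u j
  set Z' := insert (faceSide u j) Z
  set G' := graphOf (dualConfig Z')
  have hle : G' ≤ G := fun a b h => (hcross_u.adj_dualConfig_insert_iff.1 h).1
  have hsub : {v | G'.Reachable δ₁ v} ⊂ {v | G.Reachable δ₁ v} := by
    refine setOf_reachable_ssubset_of_le hle hu hru fun v h => ?_
    obtain ⟨h, hne⟩ := hcross_u.adj_dualConfig_insert_iff.1 h
    exact hne (by rw [hleaf _ h])
  have hp' : s(p₁, p₂) ∉ Z' := by
    rintro (h | h)
    · exact hlast ((h ▸ hcross_u).right_unique hcross)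
    · exact hp h
  obtain ⟨W', hW'⟩ := ih _ (hn ▸ Set.ncard_lt_ncard hsub hfin) (hac.anti hle) hp'
    (hfin.subset hsub.subset) rfl
  refine W'.exists_walk_of_forall_adj (fun a b hab ha hb => ?_)
    fun t ht => (hW' t ht).imp fun v ⟨hv, hvt⟩ => ⟨hv.mono hle, hvt⟩
  rcases hab with ⟨hab, habu | habZ⟩
  · obtain ⟨W, hW⟩ := exists_walk_around_leaf_face hleaf (habu ▸ hcross_u)
    exact ⟨W, fun t ht => ⟨u, hru, hW t ht⟩⟩
  · refine ⟨(graphOf_adj.2 ⟨hab, habZ⟩).toWalk, ?_⟩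
    simp only [Adj.support_toWalk, List.mem_cons, List.not_mem_nil, or_false]
    rintro t (rfl | rfl) <;> assumption

theorem path_around_dual_component_general (Z : Set (Sym2 V2))
    (hacyclic : (graphOf (dualConfig Z)).IsAcyclic)
    (x y : V2) (hadj : latticeAdj x y) (habs : s(x, y) ∉ Z) (k : ℕ)
    (hbox : ∀ d d' : V2, crossPair x y d d' →
      ∀ d'' : V2, (graphOf (dualConfig Z)).Reachable d d'' → dualMemBox x (k - 1) d'') :
    ∃ w : (graphOf Z).Walk x y, ∀ v ∈ w.support, v ∈ box x k := by
  obtain ⟨d, d', hcross⟩ := exists_isCrossing_of_latticeAdj hadj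
  have hC := hbox d d' hcross
  obtain ⟨W, hW⟩ := exists_walk_around_dual_component hacyclic hcross habs
    ((finite_setOf_dualMemBox x (k - 1)).subset hC)
  refine ⟨W, fun v hv => ?_⟩
  obtain ⟨u, hu, i, rfl⟩ := hW v hv
  exact faceCorner_mem_box (hC u hu) i

/-- Let `Z` be a subgraph of `ℤ²` whose dual `Z*` contains no circuits, let
`x, y` be nearest neighbors with `⟨x,y⟩ ∉ Z`, and suppose the connected component of `Z*`
containing the dual edge `⟨x,y⟩*` is contained in the box `Λ(x, k-1)`.  Then `x` and `y` are
connected by a path in `Z` contained in the box `Λ(x, k)`. -/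
theorem path_around_dual_component (Z : Set (Sym2 V2)) (hZ : Z ⊆ latticeEdges)
    (hacyclic : (graphOf (dualConfig Z)).IsAcyclic)
    (x y : V2) (hadj : latticeAdj x y) (habs : s(x, y) ∉ Z) (k : ℕ)
    (hbox : ∀ d d' : V2, crossPair x y d d' →
      ∀ d'' : V2, (graphOf (dualConfig Z)).Reachable d d'' → dualMemBox x (k - 1) d'') :
    ∃ w : (graphOf Z).Walk x y, ∀ v ∈ w.support, v ∈ box x k :=
  path_around_dual_component_general Z hacyclic x y hadj habs k hbox
end

section
/- Let X be a fixed everywhere percolating subgraph of ℤ², let ε ∈ (0,1), and let Y = Y(X,ε) be obtained from X by ε-Bernoulli addition. Then almost surely every connected component of the dual configuration Y* is finite; hence Y* is almost surely a forest consisting of finite trees. -/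
open MeasureTheory ProbabilityTheory
open scoped ENNReal

/-!
`X ⊆ Y`, so `Y` is everywhere percolating too. In a dual configuration `Z*`, a cycle `c` would
enclose the primal vertices `x` from which the rightward ray crosses `c` an odd number of times.
That set is finite and nonempty, and no edge of `Z` leaves it, since edges of `Z` cross no edge of
`Z*`. This would contradict percolation of `Z`, so `X*` and `Y*` are forests.

An edge of `Y* ⊆ X*` survives iff the primal edge it crosses was not added, and distinct dual
edges cross distinct primal edges. So `Y*` joins two dual vertices at `L¹`-distance `n` with
probability at most `(1 - ε) ^ n`: it must keep the whole path joining them in the forest `X*`.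
An infinite component of `Y*` reaches each of the `8 n` vertices at sup-distance `n` from its
root, so a union bound makes its probability zero.
-/

namespace SimpleGraph.Walk

variable {V : Type*} {G : SimpleGraph V}

lemma sum_map_edges_eq_add {a b : V} (w : G.Walk a b) (φ : Sym2 V → ZMod 2) (g : V → ZMod 2)
    (h : ∀ ⦃u v⦄, s(u, v) ∈ w.edges → φ s(u, v) = g u + g v) :
    (w.edges.map φ).sum = g a + g b := by
  induction w with
  | nil => simp [CharTwo.add_self_eq_zero]
  | cons _ _ ih =>
    rw [edges_cons, List.map_cons, List.sum_cons, h List.mem_cons_self,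
      ih fun u v huv => h (List.mem_cons_of_mem _ huv), add_assoc, CharTwo.add_cancel_left]

lemma exists_mem_support_eq {a b : V} (w : G.Walk a b) (φ : V → ℕ)
    (hφ : ∀ ⦃u v⦄, G.Adj u v → φ v ≤ φ u + 1) {n : ℕ} (ha : φ a ≤ n) (hb : n ≤ φ b) :
    ∃ v ∈ w.support, φ v = n := by
  induction w with
  | nil => exact ⟨_, List.mem_singleton_self _, by omega⟩
  | @cons a _ _ hadj _ ih =>
    by_cases hn : φ a = n
    · exact ⟨a, List.mem_cons_self, hn⟩
    · obtain ⟨v, hv, hvn⟩ := ih (by have := hφ hadj; omega) hb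
      exact ⟨v, List.mem_cons_of_mem _ hv, hvn⟩

end SimpleGraph.Walk

open Filter Topology

lemma ENNReal.tendsto_natCast_mul_pow_atTop_nhds_zero {r : ℝ≥0∞} (hr : r < 1) :
    Tendsto (fun n : ℕ => (n : ℝ≥0∞) * r ^ n) atTop (𝓝 0) := by
  have h := ENNReal.tendsto_ofReal (tendsto_pow_const_mul_const_pow_of_lt_one 1
    ENNReal.toReal_nonneg (ENNReal.toReal_lt_of_lt_ofReal (by simpa using hr)))
  rw [ENNReal.ofReal_zero] at h
  refine h.congr fun n => ?_
  rw [pow_one, ENNReal.ofReal_mul (Nat.cast_nonneg _),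
    ENNReal.ofReal_natCast, ENNReal.ofReal_pow ENNReal.toReal_nonneg,
    ENNReal.ofReal_toReal hr.ne_top]

theorem SimpleGraph.IsAcyclic.measure_reachable_le_pow {V ι Ω : Type*} [MeasurableSpace Ω]
    {μ : Measure Ω} {G : SimpleGraph V} (hG : G.IsAcyclic) {H : Ω → SimpleGraph V}
    (hHG : ∀ ω, H ω ≤ G) {B : ι → Ω → Bool} (hB : iIndepFun B μ) {r : ℝ≥0∞} (hr : r ≤ 1)
    (hBr : ∀ i, μ {ω | B i ω = false} = r) {f : Sym2 V → ι} (hf : Set.InjOn f G.edgeSet)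
    (hH : ∀ ω, ∀ e ∈ (H ω).edgeSet, B (f e) ω = false) {u v : V} {n : ℕ}
    (hn : ∀ w : G.Walk u v, n ≤ w.length) :
    μ {ω | (H ω).Reachable u v} ≤ r ^ n := by
  classical
  by_cases huv : G.Reachable u v
  swap
  · have : {ω | (H ω).Reachable u v} = ∅ :=
      Set.eq_empty_of_forall_notMem fun ω h => huv (h.mono (hHG ω))
    rw [this, measure_empty]
    exact zero_le
  obtain ⟨p⟩ : Nonempty (G.Path u v) := huv.elim fun w => ⟨w.toPath⟩
  set S : Finset ι := (p.1.edges.map f).toFinset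
  have hnS : n ≤ S.card := by
    rw [List.toFinset_card_of_nodup (p.2.edges_nodup.map_on fun e he e' he' h =>
        hf (p.1.edges_subset_edgeSet he) (p.1.edges_subset_edgeSet he') h),
      List.length_map, Walk.length_edges]
    exact hn _
  have hsub : {ω | (H ω).Reachable u v} ⊆ ⋂ i ∈ S, {ω | B i ω = false} := by
    rintro ω ⟨w⟩
    have hp : p = ⟨_, (Walk.isPath_mapLe (hHG ω)).2 w.toPath.2⟩ :=
      (hG.subsingleton_path u v).elim _ _
    simp only [Set.mem_iInter, S, List.mem_toFinset, List.mem_map]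
    rintro _ ⟨e, he, rfl⟩
    rw [hp, Walk.edges_mapLe_eq_edges] at he
    exact hH ω e (w.toPath.1.edges_subset_edgeSet he)
  calc μ {ω | (H ω).Reachable u v} ≤ μ (⋂ i ∈ S, {ω | B i ω = false}) := measure_mono hsub
    _ = ∏ i ∈ S, μ {ω | B i ω = false} :=
      hB.meas_biInter fun _ _ => ⟨{false}, measurableSet_singleton false, rfl⟩
    _ = r ^ S.card := by simp [hBr]
    _ ≤ r ^ n := pow_le_pow_of_le_one zero_le hr hnS

namespace SquareLattice

open SimpleGraph

lemma latticeAdj_iff {u v : V2} : latticeAdj u v ↔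
    (u.1 = v.1 ∧ (u.2 = v.2 + 1 ∨ v.2 = u.2 + 1)) ∨
    (u.2 = v.2 ∧ (u.1 = v.1 + 1 ∨ v.1 = u.1 + 1)) := by
  unfold latticeAdj dist1; omega

lemma sym2_eq_iff_coords {x y z w : V2} : s(x, y) = s(z, w) ↔
    (x.1 = z.1 ∧ x.2 = z.2 ∧ y.1 = w.1 ∧ y.2 = w.2) ∨
    (x.1 = w.1 ∧ x.2 = w.2 ∧ y.1 = z.1 ∧ y.2 = z.2) := by
  simp only [Sym2.eq_iff, Prod.ext_iff, and_assoc]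

lemma exists_eq_vert_or_horiz {u v : V2} (h : latticeAdj u v) : ∃ a b : ℤ,
    s(u, v) = s(((a, b - 1) : V2), ((a, b) : V2)) ∨
    s(u, v) = s(((a - 1, b) : V2), ((a, b) : V2)) := by
  rcases latticeAdj_iff.1 h with ⟨h1, h2 | h2⟩ | ⟨h1, h2 | h2⟩
  · exact ⟨u.1, u.2, Or.inl (by rw [sym2_eq_iff_coords]; omega)⟩
  · exact ⟨u.1, v.2, Or.inl (by rw [sym2_eq_iff_coords]; omega)⟩
  · exact ⟨u.1, u.2, Or.inr (by rw [sym2_eq_iff_coords]; omega)⟩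
  · exact ⟨v.1, u.2, Or.inr (by rw [sym2_eq_iff_coords]; omega)⟩

/-- The primal edge crossed by the dual edge `e` (with a junk value when `e` is not a lattice
edge). -/
def cross : Sym2 V2 → Sym2 V2 :=
  Sym2.lift ⟨fun u v =>
    if u.1 = v.1 then s(((u.1, max u.2 v.2) : V2), ((u.1 + 1, max u.2 v.2) : V2))
    else s(((max u.1 v.1, min u.2 v.2) : V2), ((max u.1 v.1, min u.2 v.2 + 1) : V2)),
  fun u v => by
    dsimp only
    rcases eq_or_ne u.1 v.1 with h | h
    · rw [if_pos h, if_pos h.symm, h, max_comm]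
    · rw [if_neg h, if_neg (Ne.symm h), max_comm, min_comm]⟩

@[simp]
lemma cross_vert (a b : ℤ) :
    cross s(((a, b - 1) : V2), ((a, b) : V2)) = s(((a, b) : V2), ((a + 1, b) : V2)) := by
  simp [cross]

@[simp]
lemma cross_horiz (a b : ℤ) :
    cross s(((a - 1, b) : V2), ((a, b) : V2)) = s(((a, b) : V2), ((a, b + 1) : V2)) := by
  simp [cross]

lemma cross_mem_latticeEdges {u v : V2} (h : latticeAdj u v) : cross s(u, v) ∈ latticeEdges := by
  obtain ⟨a, b, he | he⟩ := exists_eq_vert_or_horiz h <;> rw [he]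
  · exact ⟨_, _, by simp [latticeAdj, dist1], cross_vert a b⟩
  · exact ⟨_, _, by simp [latticeAdj, dist1], cross_horiz a b⟩

lemma cross_injOn : Set.InjOn cross latticeEdges := by
  rintro _ ⟨u, v, huv, rfl⟩ _ ⟨u', v', huv', rfl⟩ hc
  obtain ⟨a, b, he | he⟩ := exists_eq_vert_or_horiz huv <;>
    obtain ⟨a', b', he' | he'⟩ := exists_eq_vert_or_horiz huv' <;>
    simp only [he, he', cross_vert, cross_horiz, sym2_eq_iff_coords] at hc ⊢ <;> omega

lemma exists_cross_eq {x y : V2} (h : latticeAdj x y) :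
    ∃ u v : V2, latticeAdj u v ∧ cross s(u, v) = s(x, y) := by
  rcases latticeAdj_iff.1 h with ⟨h1, h2 | h2⟩ | ⟨h1, h2 | h2⟩
  · refine ⟨(y.1 - 1, y.2), (y.1, y.2), by simp [latticeAdj, dist1], ?_⟩
    rw [cross_horiz, sym2_eq_iff_coords]; dsimp only; omega
  · refine ⟨(x.1 - 1, x.2), (x.1, x.2), by simp [latticeAdj, dist1], ?_⟩
    rw [cross_horiz, sym2_eq_iff_coords]; dsimp only; omega
  · refine ⟨(y.1, y.2 - 1), (y.1, y.2), by simp [latticeAdj, dist1], ?_⟩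
    rw [cross_vert, sym2_eq_iff_coords]; dsimp only; omega
  · refine ⟨(x.1, x.2 - 1), (x.1, x.2), by simp [latticeAdj, dist1], ?_⟩
    rw [cross_vert, sym2_eq_iff_coords]; dsimp only; omega

lemma mk_mem_dualConfig_iff {Z : Set (Sym2 V2)} {u v : V2} (h : latticeAdj u v) :
    s(u, v) ∈ dualConfig Z ↔ cross s(u, v) ∉ Z := by
  constructor
  · rintro ⟨a, b, ⟨he, hZ⟩ | ⟨he, hZ⟩⟩ <;> simpa [he] using hZ
  · intro hZ
    obtain ⟨a, b, he | he⟩ := exists_eq_vert_or_horiz h <;> rw [he] at hZ ⊢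
    · exact ⟨a, b, Or.inl ⟨rfl, by simpa using hZ⟩⟩
    · exact ⟨a, b, Or.inr ⟨rfl, by simpa using hZ⟩⟩

lemma graphOf_dualConfig_adj {Z : Set (Sym2 V2)} {u v : V2} :
    (graphOf (dualConfig Z)).Adj u v ↔ latticeAdj u v ∧ cross s(u, v) ∉ Z :=
  ⟨fun h => ⟨h.1, (mk_mem_dualConfig_iff h.1).1 h.2⟩,
    fun h => ⟨h.1, (mk_mem_dualConfig_iff h.1).2 h.2⟩⟩

lemma edgeSet_graphOf_subset (Z : Set (Sym2 V2)) : (graphOf Z).edgeSet ⊆ latticeEdges := by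
  rintro ⟨u, v⟩ h
  exact ⟨u, v, h.1, rfl⟩

lemma graphOf_mono {Z Z' : Set (Sym2 V2)} (h : Z ⊆ Z') : graphOf Z ≤ graphOf Z' :=
  fun _ _ hA => ⟨hA.1, h hA.2⟩

lemma graphOf_dualConfig_anti {Z Z' : Set (Sym2 V2)} (h : Z ⊆ Z') :
    graphOf (dualConfig Z') ≤ graphOf (dualConfig Z) := fun _ _ hA =>
  graphOf_dualConfig_adj.2 ⟨(graphOf_dualConfig_adj.1 hA).1, fun hZ =>
    (graphOf_dualConfig_adj.1 hA).2 (h hZ)⟩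

lemma compInfinite_mono {Z Z' : Set (Sym2 V2)} (h : Z ⊆ Z') {x : V2} (hZ : compInfinite Z x) :
    compInfinite Z' x :=
  hZ.mono fun _ hy => hy.mono (graphOf_mono h)

lemma dist1_le_length {Z : Set (Sym2 V2)} {a b : V2} (w : (graphOf Z).Walk a b) :
    dist1 a b ≤ w.length := by
  induction w with
  | nil => simp [dist1]
  | cons hadj _ ih =>
    have := hadj.1
    simp only [latticeAdj, dist1, Walk.length_cons] at this ih ⊢
    omega

/-- `rayCrossing x e = 1` iff the dual edge `e` crosses the horizontal ray from the primal
vertex `x` to the right. -/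
def rayCrossing (x : V2) : Sym2 V2 → ZMod 2 :=
  Sym2.lift ⟨fun u v => if u.1 = v.1 ∧ max u.2 v.2 = x.2 ∧ x.1 ≤ u.1 then 1 else 0,
    fun u v => by
      dsimp only
      rcases eq_or_ne u.1 v.1 with h | h
      · rw [max_comm, h]
      · rw [if_neg fun h' => h h'.1, if_neg fun h' => h h'.1.symm]⟩

/-- For a cycle `c`, this is `1` exactly when `x` lies inside `c`. -/
def winding {G : SimpleGraph V2} {d : V2} (c : G.Walk d d) (x : V2) : ZMod 2 :=
  (c.edges.map (rayCrossing x)).sum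

lemma rayCrossing_add_rayCrossing_right {u v : V2} (h : latticeAdj u v) (a b : ℤ) :
    rayCrossing (a, b) s(u, v) + rayCrossing (a + 1, b) s(u, v) +
      (if s(u, v) = s(((a, b - 1) : V2), ((a, b) : V2)) then 1 else 0) = 0 := by
  simp only [rayCrossing, Sym2.lift_mk, sym2_eq_iff_coords]
  rcases latticeAdj_iff.1 h with ⟨_, _ | _⟩ | ⟨_, _ | _⟩ <;>
    split_ifs <;> first | decide | (exfalso; omega)

/-- The rays from `(a, b)` and `(a, b + 1)` bound a half-strip, which contains the dual vertex `w`
iff `w.2 = b ∧ a ≤ w.1`; a dual edge crosses its boundary an odd number of times iff exactly one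
of its ends lies in it. -/
lemma rayCrossing_add_rayCrossing_up {u v : V2} (h : latticeAdj u v) (a b : ℤ) :
    rayCrossing (a, b) s(u, v) + rayCrossing (a, b + 1) s(u, v) +
      (if s(u, v) = s(((a - 1, b) : V2), ((a, b) : V2)) then 1 else 0) =
      (if u.2 = b ∧ a ≤ u.1 then 1 else 0) + (if v.2 = b ∧ a ≤ v.1 then 1 else 0) := by
  simp only [rayCrossing, Sym2.lift_mk, sym2_eq_iff_coords]
  rcases latticeAdj_iff.1 h with ⟨_, _ | _⟩ | ⟨_, _ | _⟩ <;>
    split_ifs <;> first | decide | (exfalso; omega)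

variable {Z : Set (Sym2 V2)} {d : V2}

lemma winding_add_winding_eq_count_of_coboundary (c : (graphOf Z).Walk d d) (x y : V2)
    (f : Sym2 V2) (g : V2 → ZMod 2) (h : ∀ ⦃u v⦄, latticeAdj u v →
      rayCrossing x s(u, v) + rayCrossing y s(u, v) + (if s(u, v) = f then 1 else 0) =
        g u + g v) :
    winding c x + winding c y = c.edges.count f := by
  have hsum := c.sum_map_edges_eq_add
    (fun e => rayCrossing x e + rayCrossing y e + if e = f then 1 else 0) g
    fun u v huv => h (c.adj_of_mem_edges huv).1
  rw [List.sum_map_add, List.sum_map_add, List.sum_map_ite_eq, CharTwo.add_self_eq_zero] at hsum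
  simpa [winding, CharTwo.add_eq_zero] using hsum

lemma winding_add_winding_of_cross (c : (graphOf Z).Walk d d) {u v x y : V2}
    (h : latticeAdj u v) (hxy : cross s(u, v) = s(x, y)) :
    winding c x + winding c y = c.edges.count s(u, v) := by
  obtain ⟨a, b, he | he⟩ := exists_eq_vert_or_horiz h <;> rw [he] at hxy ⊢
  · have key : winding c (a, b) + winding c (a + 1, b) = _ :=
      winding_add_winding_eq_count_of_coboundary c _ _ _ (fun _ => 0)
        fun u v huv => (rayCrossing_add_rayCrossing_right huv a b).trans (add_zero 0).symm
    rw [cross_vert, Sym2.eq_iff] at hxy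
    rcases hxy with ⟨rfl, rfl⟩ | ⟨rfl, rfl⟩
    exacts [key, by rwa [add_comm]]
  · have key : winding c (a, b) + winding c (a, b + 1) = _ :=
      winding_add_winding_eq_count_of_coboundary c _ _ _ _
        fun u v huv => rayCrossing_add_rayCrossing_up huv a b
    rw [cross_horiz, Sym2.eq_iff] at hxy
    rcases hxy with ⟨rfl, rfl⟩ | ⟨rfl, rfl⟩
    exacts [key, by rwa [add_comm]]

/-- From a vertex to the left of the box `[-K, K]²`, the ray crosses every vertical dual edge of
the box at its height, which is the coboundary below; from any other vertex outside the box, it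
crosses no dual edge of the box. -/
lemma rayCrossing_eq_of_far {u v x : V2} {K : ℕ} (h : latticeAdj u v)
    (hu : max u.1.natAbs u.2.natAbs ≤ K) (hv : max v.1.natAbs v.2.natAbs ≤ K)
    (hx : K < max x.1.natAbs x.2.natAbs) :
    rayCrossing x s(u, v) =
      (if x.1 < -K ∧ x.2 ≤ u.2 then 1 else 0) + (if x.1 < -K ∧ x.2 ≤ v.2 then 1 else 0) := by
  simp only [rayCrossing, Sym2.lift_mk]
  rcases latticeAdj_iff.1 h with ⟨_, _ | _⟩ | ⟨_, _ | _⟩ <;>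
    split_ifs <;> first | decide | (exfalso; omega)

lemma winding_eq_zero_of_far (c : (graphOf Z).Walk d d) {K : ℕ}
    (hK : ∀ z ∈ c.support, max z.1.natAbs z.2.natAbs ≤ K) {x : V2}
    (hx : K < max x.1.natAbs x.2.natAbs) : winding c x = 0 := by
  rw [winding, c.sum_map_edges_eq_add _ _ fun u v huv => rayCrossing_eq_of_far
    (c.adj_of_mem_edges huv).1 (hK u (c.fst_mem_support_of_mem_edges huv))
    (hK v (c.snd_mem_support_of_mem_edges huv)) hx, CharTwo.add_self_eq_zero]

lemma finite_setOf_winding_ne_zero (c : (graphOf Z).Walk d d) :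
    {x | winding c x ≠ 0}.Finite := by
  obtain ⟨K, hK⟩ := (c.support.toFinset.image fun z : V2 => max z.1.natAbs z.2.natAbs).bddAbove
  refine (Set.finite_Icc ((-K, -K) : V2) (K, K)).subset fun x hx => ?_
  by_contra hout
  refine hx (winding_eq_zero_of_far c (fun z hz => hK ?_) ?_)
  · exact Finset.mem_coe.2 (Finset.mem_image_of_mem _ (List.mem_toFinset.2 hz))
  · simp only [Set.mem_Icc, Prod.le_def] at hout
    omega

lemma winding_eq_of_adj (c : (graphOf (dualConfig Z)).Walk d d) {x y : V2}
    (h : (graphOf Z).Adj x y) : winding c x = winding c y := by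
  obtain ⟨u, v, huv, hcross⟩ := exists_cross_eq h.1
  have hnot : s(u, v) ∉ c.edges := fun hmem =>
    (graphOf_dualConfig_adj.1 (c.adj_of_mem_edges hmem)).2 (hcross ▸ h.2)
  rw [← CharTwo.add_eq_zero, winding_add_winding_of_cross c huv hcross,
    List.count_eq_zero.2 hnot, Nat.cast_zero]

lemma winding_eq_of_reachable (c : (graphOf (dualConfig Z)).Walk d d) {x y : V2}
    (h : (graphOf Z).Reachable x y) : winding c x = winding c y := by
  obtain ⟨w⟩ := h
  induction w with
  | nil => rfl
  | cons hadj _ ih => exact (winding_eq_of_adj c hadj).trans ih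

lemma exists_winding_eq_one {c : (graphOf Z).Walk d d} (hc : c.IsCycle) :
    ∃ x, winding c x = 1 := by
  obtain ⟨e, he⟩ := List.exists_mem_of_ne_nil c.edges fun h => hc.not_nil (Walk.edges_eq_nil.1 h)
  induction e using Sym2.ind with
  | _ u v =>
  obtain ⟨⟨x, y⟩, hxy⟩ := Sym2.mk_surjective (cross s(u, v))
  have hsum := winding_add_winding_of_cross c (c.adj_of_mem_edges he).1 hxy.symm
  rw [List.count_eq_one_of_mem hc.edges_nodup he, Nat.cast_one] at hsum
  have parity : ∀ p q : ZMod 2, p + q = 1 → p = 1 ∨ q = 1 := by decide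
  rcases parity _ _ hsum with hx | hy
  exacts [⟨x, hx⟩, ⟨y, hy⟩]

theorem isAcyclic_graphOf_dualConfig (hZ : ∀ x, compInfinite Z x) :
    (graphOf (dualConfig Z)).IsAcyclic := by
  intro d c hc
  obtain ⟨x, hx⟩ := exists_winding_eq_one hc
  refine hZ x ((finite_setOf_winding_ne_zero c).subset fun y hy => ?_)
  show winding c y ≠ 0
  rw [← winding_eq_of_reachable c hy, hx]
  exact one_ne_zero

lemma exists_reachable_add_mem_box
    (h : {y | (graphOf Z).Reachable d y}.Infinite) (n : ℕ) :
    ∃ z ∈ Finset.box n, (graphOf Z).Reachable d (d + z) := by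
  let φ : V2 → ℕ := fun y => max (y.1 - d.1).natAbs (y.2 - d.2).natAbs
  have hball : {y | φ y ≤ n}.Finite := by
    refine (Set.finite_Icc (d.1 - n, d.2 - n) (d.1 + n, d.2 + n)).subset fun y hy => ?_
    replace hy : max (y.1 - d.1).natAbs (y.2 - d.2).natAbs ≤ n := hy
    simp only [Set.mem_Icc, Prod.le_def]
    omega
  obtain ⟨y, ⟨w⟩, hy⟩ := (h.sdiff hball).nonempty
  obtain ⟨v, hv, hvn⟩ := w.exists_mem_support_eq φ
    (fun a b hab => by have := hab.1; simp only [latticeAdj, dist1, φ] at this ⊢; omega)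
    (n := n) (by simp [φ]) (not_le.1 hy).le
  exact ⟨v - d, Int.mem_box.2 hvn, by rw [add_sub_cancel]; exact ⟨w.takeUntil v hv⟩⟩

lemma bernoulli_cross_eq_false {Ω : Type} {X : Set (Sym2 V2)} {B : Sym2 V2 → Ω → Bool} {ω : Ω}
    {e : Sym2 V2} (he : e ∈ (graphOf (dualConfig (addConfig X B ω))).edgeSet) :
    B (cross e) ω = false := by
  induction e using Sym2.ind with
  | _ u v =>
  obtain ⟨hadj, hnot⟩ := graphOf_dualConfig_adj.1 he
  simp only [addConfig, Set.mem_union, Set.mem_ofPred_eq, cross_mem_latticeEdges hadj, true_and,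
    not_or, Bool.not_eq_true] at hnot
  exact hnot.2

variable {Ω : Type} [MeasurableSpace Ω] {μ : Measure Ω} {X : Set (Sym2 V2)}
  {B : Sym2 V2 → Ω → Bool} {ε : ℝ}

lemma measure_bernoulli_eq_false [IsProbabilityMeasure μ] (hB : BernoulliFamily μ ε B)
    (hε : 0 ≤ ε) (e : Sym2 V2) : μ {ω | B e ω = false} = ENNReal.ofReal (1 - ε) := by
  have hcompl : {ω | B e ω = false} = {ω | B e ω = true}ᶜ := by ext; simp
  rw [hcompl, prob_compl_eq_one_sub
    (show MeasurableSet {ω | B e ω = true} from hB.1 e (measurableSet_singleton true)), hB.2.2 e,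
    ENNReal.ofReal_sub 1 hε, ENNReal.ofReal_one]

lemma measure_reachable_dualConfig_addConfig_le [IsProbabilityMeasure μ]
    (hB : BernoulliFamily μ ε B) (hε : 0 ≤ ε) (hX : (graphOf (dualConfig X)).IsAcyclic)
    (d y : V2) :
    μ {ω | (graphOf (dualConfig (addConfig X B ω))).Reachable d y} ≤
      ENNReal.ofReal (1 - ε) ^ dist1 d y :=
  hX.measure_reachable_le_pow (fun _ => graphOf_dualConfig_anti Set.subset_union_left) hB.2.1
    (ENNReal.ofReal_le_one.2 (by linarith)) (measure_bernoulli_eq_false hB hε)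
    (cross_injOn.mono (edgeSet_graphOf_subset _)) (fun _ _ he => bernoulli_cross_eq_false he)
    dist1_le_length

lemma measure_setOf_infinite_component_le [IsProbabilityMeasure μ] (hB : BernoulliFamily μ ε B)
    (hε : 0 ≤ ε) (hX : (graphOf (dualConfig X)).IsAcyclic) (d : V2) {n : ℕ} (hn : n ≠ 0) :
    μ {ω | {y | (graphOf (dualConfig (addConfig X B ω))).Reachable d y}.Infinite} ≤
      8 * ((n : ℝ≥0∞) * ENNReal.ofReal (1 - ε) ^ n) := calc
  _ ≤ μ (⋃ z ∈ Finset.box n,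
        {ω | (graphOf (dualConfig (addConfig X B ω))).Reachable d (d + z)}) :=
    measure_mono fun ω hω => by
      obtain ⟨z, hz, hreach⟩ := exists_reachable_add_mem_box hω n
      exact Set.mem_iUnion₂_of_mem hz hreach
  _ ≤ ∑ z ∈ Finset.box n,
        μ {ω | (graphOf (dualConfig (addConfig X B ω))).Reachable d (d + z)} :=
    measure_biUnion_finset_le _ _
  _ ≤ ∑ z ∈ Finset.box n, ENNReal.ofReal (1 - ε) ^ n := Finset.sum_le_sum fun z hz =>
    (measure_reachable_dualConfig_addConfig_le hB hε hX d (d + z)).trans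
      (pow_le_pow_of_le_one zero_le (ENNReal.ofReal_le_one.2 (by linarith)) (by
        rw [Int.mem_box] at hz
        simp only [dist1, Prod.fst_add, Prod.snd_add]
        omega))
  _ = 8 * ((n : ℝ≥0∞) * ENNReal.ofReal (1 - ε) ^ n) := by
    rw [Finset.sum_const, Int.card_box hn, nsmul_eq_mul]
    push_cast
    ring

lemma measure_setOf_infinite_component_eq_zero [IsProbabilityMeasure μ]
    (hB : BernoulliFamily μ ε B) (hε : 0 < ε) (hX : (graphOf (dualConfig X)).IsAcyclic)
    (d : V2) :
    μ {ω | {y | (graphOf (dualConfig (addConfig X B ω))).Reachable d y}.Infinite} = 0 := by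
  have hlim := ENNReal.Tendsto.const_mul (a := 8)
    (ENNReal.tendsto_natCast_mul_pow_atTop_nhds_zero (r := ENNReal.ofReal (1 - ε))
      (by simpa using hε)) (Or.inr ENNReal.ofNat_ne_top)
  rw [mul_zero] at hlim
  exact le_antisymm (ge_of_tendsto hlim ((eventually_ne_atTop 0).mono fun _ hn =>
    measure_setOf_infinite_component_le hB hε.le hX d hn)) zero_le

end SquareLattice

open SquareLattice in
/-- Let `X` be an everywhere percolating subgraph of `ℤ²`, `ε ∈ (0,1)`, and
let `Y = Y(X,ε)` be obtained from `X` by `ε`-Bernoulli addition.  Then almost surely every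
connected component of the dual configuration `Y*` is finite; hence `Y*` is almost surely a
forest consisting of finite trees. -/
theorem dual_is_forest_of_finite_trees
    {Ω : Type} [MeasurableSpace Ω] (μ : Measure Ω) [IsProbabilityMeasure μ]
    (X : Set (Sym2 V2)) (hX : EverywherePercolating X)
    (ε : ℝ) (hε : ε ∈ Set.Ioo (0 : ℝ) 1)
    (B : Sym2 V2 → Ω → Bool) (hB : BernoulliFamily μ ε B) :
    ∀ᵐ ω ∂μ,
      (∀ d : V2, {d' | (graphOf (dualConfig (addConfig X B ω))).Reachable d d'}.Finite) ∧
      (graphOf (dualConfig (addConfig X B ω))).IsAcyclic := by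
  have hXacyc := isAcyclic_graphOf_dualConfig hX.2
  have hfin : ∀ᵐ ω ∂μ,
      ∀ d : V2, {d' | (graphOf (dualConfig (addConfig X B ω))).Reachable d d'}.Finite :=
    ae_all_iff.2 fun d => ae_iff.2 (measure_setOf_infinite_component_eq_zero hB hε.1 hXacyc d)
  filter_upwards [hfin] with ω hω
  exact ⟨hω, isAcyclic_graphOf_dualConfig fun x => compInfinite_mono Set.subset_union_left (hX.2 x)⟩
end
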